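/- Let K be a field of characteristic zero, let n ≥ 2, and let L be a LAnKe over K. Then for all z_0, z_1, …, z_{n-1}, w_1, …, w_{n-1} ∈ L one has Σ_{i=1}^{n-1} (−1)^i [[z_i,w_1,…,w_{n-1}],z_0,z_1,…,ẑ_i,…,z_{n-1}] = (n−1)·[[z_0,z_1,…,z_{n-1}],w_1,…,w_{n-1}] + Σ_{i=1}^{n-1} (−1)^i Σ_{j=1}^{n-1} (−1)^{j+1} [[z_0,w_j,z_1,…,ẑ_i,…,z_{n-1}],z_i,w_1,…,ŵ_j,…,w_{n-1}], where the integer coefficient n−1 acts via the canonical map ℤ → K. -/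

import Mathlib

/-!
For a fixed `i`, the generalized Jacobi identity with inner bracket `[z_i, w_1, …, w_{n-1}]` and
outer arguments `z_0, z_1, …, ẑ_i, …, z_{n-1}` expands the `i`-th left-hand term into
`[[z_i, z_0, …, ẑ_i, …], w]` plus one term per `w_j`. Skew-symmetry turns the first into
`(-1)^i [[z_0, z], w]`, and, after swapping `w_j` with `z_0` and moving the inner bracket to the
front, the others into the `(i, j)` terms of the right-hand side. Weighted by `(-1)^i`, the first
terms no longer depend on `i`, so summing over `i` yields `n - 1` copies of `[[z_0, z], w]`.
-/

/-- The tuple `(a, v₀, …, v_{n-2})` of length `n`: one element `a` prepended to the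
length-`(n-1)` tuple `v`. -/
def consTup {L : Type*} {n : ℕ} (a : L) (v : Fin (n - 1) → L) : Fin n → L :=
  fun m =>
    if h0 : (m : ℕ) = 0 then a
    else v ⟨(m : ℕ) - 1, by have := m.isLt; omega⟩

/-- The tuple `(a, b, v₀, …, v̂ᵢ, …, v_{n-2})` of length `n`: two elements `a, b` followed
by the length-`(n-1)` tuple `v` with its `i`-th entry omitted. -/
def pairCons {L : Type*} {n : ℕ} (a b : L) (v : Fin (n - 1) → L) (i : Fin (n - 1)) :
    Fin n → L :=
  fun m =>
    if h0 : (m : ℕ) = 0 then a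
    else if h1 : (m : ℕ) = 1 then b
    else if (m : ℕ) - 2 < (i : ℕ) then
      v ⟨(m : ℕ) - 2, by have := m.isLt; have := i.isLt; omega⟩
    else v ⟨(m : ℕ) - 1, by have := m.isLt; omega⟩

/-- A LAnKe (Lie algebra of the `n`-th kind, or Filippov algebra) over a field `K`:
a vector space `L` with an `n`-linear bracket which is skew-symmetric and satisfies the
generalized Jacobi identity. -/
structure LAnKe (K : Type*) [Field K] (n : ℕ) (L : Type*)
    [AddCommGroup L] [Module K L] where
  bracket : MultilinearMap K (fun _ : Fin n => L) L
  /-- `[x_1, …, x_n] = sign σ • [x_{σ(1)}, …, x_{σ(n)}]` for every permutation `σ`. -/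
  skew : ∀ (x : Fin n → L) (σ : Equiv.Perm (Fin n)),
    bracket x = (Equiv.Perm.sign σ : ℤ) • bracket (x ∘ σ)
  /-- The generalized Jacobi identity:
  `[[x_1,…,x_n], y_1,…,y_{n-1}] = Σ_{i=1}^n [x_1,…,[x_i,y_1,…,y_{n-1}],…,x_n]`. -/
  jacobi : ∀ (x : Fin n → L) (y : Fin (n - 1) → L),
    bracket (consTup (bracket x) y) =
      ∑ i : Fin n, bracket (Function.update x i (bracket (consTup (x i) y)))

section Tuples

variable {L : Type*} {k : ℕ}

theorem consTup_eq_cons (a : L) (v : Fin k → L) : consTup (n := k + 1) a v = Fin.cons a v := by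
  funext m
  cases m using Fin.cases <;> simp [consTup]

theorem pairCons_eq_cons (a b : L) (v : Fin (k + 1) → L) (i : Fin (k + 1)) :
    pairCons (n := k + 2) a b v i = Fin.cons a (Fin.cons b (i.removeNth v)) := by
  funext m
  cases m using Fin.cases with
  | zero => simp [pairCons]
  | succ m =>
    cases m using Fin.cases with
    | zero => simp [pairCons]
    | succ j =>
      simp only [pairCons, Fin.cons_succ, Fin.removeNth, Fin.succAbove, Fin.lt_def,
        Fin.val_succ, Fin.val_castSucc, Nat.add_eq_zero_iff, Nat.add_eq_right, one_ne_zero,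
        and_false, ↓reduceDIte, Nat.reduceSubDiff, Nat.add_one_sub_one, add_tsub_cancel_right]
      split_ifs <;> rfl

end Tuples

namespace LAnKe

variable {K : Type*} [Field K] {L : Type*} [AddCommGroup L] [Module K L] {k : ℕ}

theorem bracket_insertNth (alg : LAnKe K (k + 1) L) (p : Fin (k + 1)) (a : L)
    (u : Fin k → L) :
    alg.bracket (p.insertNth a u) = (-1 : ℤ) ^ (p : ℕ) • alg.bracket (Fin.cons a u) := by
  rw [alg.skew (Fin.cons a u) p.cycleRange, Fin.cons_comp_cycleRange, Fin.sign_cycleRange,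
    smul_smul]
  push_cast
  rw [← pow_add, Even.neg_one_pow ⟨_, rfl⟩, one_smul]

theorem bracket_cons_cons_swap (alg : LAnKe K (k + 2) L) (a b : L) (u : Fin k → L) :
    alg.bracket (Fin.cons a (Fin.cons b u)) = -alg.bracket (Fin.cons b (Fin.cons a u)) := by
  have h := alg.bracket_insertNth (0 : Fin (k + 1)).succ a (Fin.cons b u)
  rw [Fin.insertNth_succ_cons, Fin.insertNth_zero', Fin.val_succ, Fin.val_zero, pow_one,
    neg_one_smul] at h
  rw [h, neg_neg]

theorem bracket_cons_update (alg : LAnKe K (k + 2) L) (a : L) (x : Fin (k + 1) → L)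
    (j : Fin (k + 1)) (c : L) :
    alg.bracket (Fin.cons a (Function.update x j c))
      = (-1 : ℤ) ^ ((j : ℕ) + 1) • alg.bracket (Fin.cons c (Fin.cons a (j.removeNth x))) := by
  rw [← Fin.insertNth_removeNth, ← Fin.insertNth_succ_cons, bracket_insertNth, Fin.val_succ]

theorem jacobi_cons (alg : LAnKe K (k + 1) L) (a : L) (x y : Fin k → L) :
    alg.bracket (Fin.cons (alg.bracket (Fin.cons a x)) y)
      = alg.bracket (Fin.cons (alg.bracket (Fin.cons a y)) x)
        + ∑ j : Fin k, alg.bracket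
            (Fin.cons a (Function.update x j (alg.bracket (Fin.cons (x j) y)))) := by
  have h := alg.jacobi (Fin.cons a x) y
  simp only [consTup_eq_cons, Fin.sum_univ_succ, Fin.cons_zero, Fin.cons_succ,
    Fin.update_cons_zero, ← Fin.cons_update] at h
  exact h

theorem bracket_cons_removeNth_cons (alg : LAnKe K (k + 2) L) (a : L) (x : Fin (k + 1) → L)
    (i : Fin (k + 1)) :
    alg.bracket (Fin.cons (x i) (Fin.cons a (i.removeNth x)))
      = (-1 : ℤ) ^ ((i : ℕ) + 1) • alg.bracket (Fin.cons a x) := by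
  conv_rhs => rw [← Fin.insertNth_self_removeNth i x, ← Fin.insertNth_succ_cons,
    bracket_insertNth, smul_smul, Fin.val_succ, ← pow_add, Even.neg_one_pow ⟨_, rfl⟩, one_smul]

theorem bracket_pairCons_bracket_consTup (alg : LAnKe K (k + 2) L) (z0 : L)
    (z w : Fin (k + 1) → L) (i : Fin (k + 1)) :
    alg.bracket (pairCons (alg.bracket (consTup (z i) w)) z0 z i)
      = (-1 : ℤ) ^ ((i : ℕ) + 1) • alg.bracket (consTup (alg.bracket (consTup z0 z)) w)
        + ∑ j : Fin (k + 1), (-1 : ℤ) ^ (((j : ℕ) + 1) + 1) •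
            alg.bracket (pairCons (alg.bracket (pairCons z0 (w j) z i)) (z i) w j) := by
  simp only [pairCons_eq_cons, consTup_eq_cons]
  rw [jacobi_cons, bracket_cons_removeNth_cons, ← Int.cast_smul_eq_zsmul K,
    MultilinearMap.cons_smul, Int.cast_smul_eq_zsmul]
  congr 1
  refine Finset.sum_congr rfl fun j _ => ?_
  rw [bracket_cons_cons_swap, Fin.cons_update, MultilinearMap.map_update_neg, ← Fin.cons_update,
    bracket_cons_update, pow_succ _ ((j : ℕ) + 1), mul_neg_one, neg_smul]

end LAnKe

/-- `z i : L` for `i : Fin (n-1)` is the paper's `z_{i+1}` (so the paper's sign `(-1)^i` is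
`(-1)^{(i:ℕ)+1}`), likewise for `w`. -/
theorem lanke_sum_exchange_general
    (K : Type*) [Field K] (n : ℕ) (hn : 2 ≤ n)
    (L : Type*) [AddCommGroup L] [Module K L] (alg : LAnKe K n L)
    (z0 : L) (z w : Fin (n - 1) → L) :
    ∑ i : Fin (n - 1), ((-1 : ℤ) ^ ((i : ℕ) + 1)) •
        alg.bracket (pairCons (alg.bracket (consTup (z i) w)) z0 z i) =
      (((n : ℤ) - 1 : ℤ) : K) •
          alg.bracket (consTup (alg.bracket (consTup z0 z)) w) +
        ∑ i : Fin (n - 1), ∑ j : Fin (n - 1),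
          ((-1 : ℤ) ^ ((i : ℕ) + 1) * (-1 : ℤ) ^ (((j : ℕ) + 1) + 1)) •
            alg.bracket
              (pairCons (alg.bracket (pairCons z0 (w j) z i)) (z i) w j) := by
  obtain ⟨k, rfl⟩ : ∃ k, n = k + 2 := ⟨n - 2, by omega⟩
  have hcard (X : L) : ((((k + 2 : ℕ) : ℤ) - 1 : ℤ) : K) • X = ∑ _i : Fin (k + 2 - 1), X := by
    rw [Finset.sum_const, Finset.card_univ, Fintype.card_fin, ← Nat.cast_smul_eq_nsmul K]
    push_cast
    ring_nf
  rw [hcard, ← Finset.sum_add_distrib]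
  refine Finset.sum_congr rfl fun i _ => ?_
  rw [alg.bracket_pairCons_bracket_consTup, smul_add, smul_smul, ← pow_add,
    Even.neg_one_pow ⟨_, rfl⟩, one_smul, Finset.smul_sum]
  exact congrArg _ (Finset.sum_congr rfl fun j _ => smul_smul _ _ _)

/-- in a LAnKe,
`Σ_{i=1}^{n-1} (-1)^i [[z_i,w_1,…,w_{n-1}], z_0, z_1,…,ẑ_i,…,z_{n-1}]
  = (n-1)·[[z_0,z_1,…,z_{n-1}], w_1,…,w_{n-1}]
    + Σ_{i=1}^{n-1} (-1)^i Σ_{j=1}^{n-1} (-1)^{j+1}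
        [[z_0,w_j,z_1,…,ẑ_i,…,z_{n-1}], z_i, w_1,…,ŵ_j,…,w_{n-1}]`,
where `n-1` acts via the canonical map `ℤ → K`. Here `z i : L` for `i : Fin (n-1)` is
the paper's `z_{i+1}` (so the paper's sign `(-1)^i` is `(-1)^{(i:ℕ)+1}`), likewise for `w`. -/
theorem lanke_sum_exchange
    (K : Type*) [Field K] [CharZero K] (n : ℕ) (hn : 2 ≤ n)
    (L : Type*) [AddCommGroup L] [Module K L] (alg : LAnKe K n L)
    (z0 : L) (z w : Fin (n - 1) → L) :
    ∑ i : Fin (n - 1), ((-1 : ℤ) ^ ((i : ℕ) + 1)) •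
        alg.bracket (pairCons (alg.bracket (consTup (z i) w)) z0 z i) =
      (((n : ℤ) - 1 : ℤ) : K) •
          alg.bracket (consTup (alg.bracket (consTup z0 z)) w) +
        ∑ i : Fin (n - 1), ∑ j : Fin (n - 1),
          ((-1 : ℤ) ^ ((i : ℕ) + 1) * (-1 : ℤ) ^ (((j : ℕ) + 1) + 1)) •
            alg.bracket
              (pairCons (alg.bracket (pairCons z0 (w j) z i)) (z i) w j) :=
  lanke_sum_exchange_general K n hn L alg z0 z w
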